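/- For every (h,t) with h > 0 and 4h²cos(t)+3h²+1 ≥ 0, the four vectors q∞, C⁻¹(q∞), CBC⁻¹(q∞), CBC(q∞) in ℂ⁴ satisfy q∞ - C⁻¹(q∞) + CBC⁻¹(q∞) - CBC(q∞) = 0; in particular these four vectors span a subspace of ℂ⁴ of dimension at most 3. -/

import Mathlib

open Matrix

noncomputable section

def Dparam (h t : ℝ) : ℝ := Real.sqrt (4 * h ^ 2 * Real.cos t + 3 * h ^ 2 + 1)

def Amat : Matrix (Fin 4) (Fin 4) ℂ :=
  !![1, 2, 0, -2;
     0, 1, 0, -2;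
     0, 0, 1, 0;
     0, 0, 0, 1]

def Bmat (h : ℝ) : Matrix (Fin 4) (Fin 4) ℂ :=
  !![0, 0, 0, -(1 / (2 * (h : ℂ) ^ 2));
     0, -1, 0, 0;
     0, 0, 1, 0;
     -(2 * (h : ℂ) ^ 2), 0, 0, 0]

def Cmat (h t : ℝ) : Matrix (Fin 4) (Fin 4) ℂ :=
  !![(4 * (h : ℂ) ^ 2 + 4 * (h : ℂ) ^ 2 * Complex.exp (t * Complex.I) + 1) / (4 * (h : ℂ) ^ 2),
       -((4 * (h : ℂ) ^ 2 * Complex.exp (t * Complex.I) + 1) / (4 * (h : ℂ) ^ 2)),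
       -((4 * (h : ℂ) ^ 2 + Complex.exp (-t * Complex.I)) * (Dparam h t : ℂ) / (4 * (h : ℂ) ^ 3)),
       -((16 * (h : ℂ) ^ 4 + 8 * (h : ℂ) ^ 2 * (Real.cos t : ℂ) + 1) / (8 * (h : ℂ) ^ 4));
     -(1 / 2), -(1 / 2),
       Complex.exp (-t * Complex.I) * (Dparam h t : ℂ) / (2 * (h : ℂ)),
       (4 * (h : ℂ) ^ 2 * Complex.exp (-t * Complex.I) + 1) / (4 * (h : ℂ) ^ 2);
     Complex.exp (t * Complex.I) * (Dparam h t : ℂ) / (2 * (h : ℂ)),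
       -(Complex.exp (t * Complex.I) * (Dparam h t : ℂ) / (2 * (h : ℂ))),
       -((4 * (h : ℂ) ^ 2 * (Real.cos t : ℂ) + (h : ℂ) ^ 2 + 1) / (2 * (h : ℂ) ^ 2)),
       -((4 * (h : ℂ) ^ 2 + Complex.exp (t * Complex.I)) * (Dparam h t : ℂ) / (4 * (h : ℂ) ^ 3));
     -(1 / 2), 1 / 2,
       Complex.exp (-t * Complex.I) * (Dparam h t : ℂ) / (2 * (h : ℂ)),
       (4 * (h : ℂ) ^ 2 + 4 * (h : ℂ) ^ 2 * Complex.exp (-t * Complex.I) + 1) / (4 * (h : ℂ) ^ 2)]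

def qInf : Fin 4 → ℂ := ![1, 0, 0, 0]

end

set_option maxHeartbeats 4000000 in
theorem coplanar_four_points (h t : ℝ) (hh : 0 < h)
    (hD : 0 ≤ 4 * h ^ 2 * Real.cos t + 3 * h ^ 2 + 1) :
    qInf - (Cmat h t)⁻¹.mulVec qInf
        + (Cmat h t * Bmat h * (Cmat h t)⁻¹).mulVec qInf
        - (Cmat h t * Bmat h * Cmat h t).mulVec qInf = 0 ∧
    Module.finrank ℂ (Submodule.span ℂ
        ({qInf, (Cmat h t)⁻¹.mulVec qInf,
          (Cmat h t * Bmat h * (Cmat h t)⁻¹).mulVec qInf,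
          (Cmat h t * Bmat h * Cmat h t).mulVec qInf} : Set (Fin 4 → ℂ))) ≤ 3 := by
  classical
  have hx : (h : ℂ) ≠ 0 := by exact_mod_cast hh.ne'
  have hxi : (h : ℂ) * (h : ℂ)⁻¹ = 1 := mul_inv_cancel₀ hx
  have hef : Complex.exp ((t:ℂ) * Complex.I) * Complex.exp (-((t:ℂ) * Complex.I)) = 1 := by
    rw [← Complex.exp_add]; simp
  have hcos0 : Complex.cos (t:ℂ)
      = (Complex.exp ((t:ℂ) * Complex.I) + Complex.exp (-(t:ℂ) * Complex.I)) / 2 := rfl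
  have hcos : Complex.cos (t:ℂ)
      = (Complex.exp ((t:ℂ) * Complex.I) + Complex.exp (-((t:ℂ) * Complex.I))) / 2 := by
    rw [hcos0, neg_mul]
  have hd : ((Dparam h t : ℝ) : ℂ) ^ 2
      = 4 * (h:ℂ) ^ 2 * ((Complex.exp ((t:ℂ) * Complex.I)
          + Complex.exp (-((t:ℂ) * Complex.I))) / 2) + 3 * (h:ℂ) ^ 2 + 1 := by
    have h1 : (Dparam h t) ^ 2 = 4 * h ^ 2 * Real.cos t + 3 * h ^ 2 + 1 := Real.sq_sqrt hD
    have h2 : ((Dparam h t : ℝ) : ℂ) ^ 2 = ((4 * h ^ 2 * Real.cos t + 3 * h ^ 2 + 1 : ℝ) : ℂ) := by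
      exact_mod_cast congrArg (fun r : ℝ => (r : ℂ)) h1
    rw [h2]; push_cast; rw [hcos]
  set w : Fin 4 → ℂ := ![1/(4*(h:ℂ)^2) + 1 + Complex.exp ((t:ℂ) * Complex.I), 1/2,
      Complex.exp ((t:ℂ) * Complex.I) * ((Dparam h t : ℝ) : ℂ)/(2*(h:ℂ)), -(1/2)] with hwdef
  have hCw : Cmat h t *ᵥ w = qInf := by
    funext i
    fin_cases i
    · simp [hwdef, Cmat, qInf, Matrix.mulVec, dotProduct, Fin.sum_univ_four]
      try rw [hcos]
      linear_combination (norm := ring1)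
        (((-1:ℂ)/8) * (h:ℂ)⁻¹^4 * Complex.exp ((t:ℂ) * Complex.I) * Complex.exp (-((t:ℂ) * Complex.I))
          + ((-1:ℂ)/2) * (h:ℂ)^2 * (h:ℂ)⁻¹^4 * Complex.exp ((t:ℂ) * Complex.I)) * hd
        + (((-1:ℂ)/8) * (h:ℂ)⁻¹^4
          + ((-3:ℂ)/8) * (h:ℂ)^2 * (h:ℂ)⁻¹^4
          + ((-1:ℂ)/4) * (h:ℂ)^2 * (h:ℂ)⁻¹^4 * Complex.exp (-((t:ℂ) * Complex.I))
          + ((-1:ℂ)/4) * (h:ℂ)^2 * (h:ℂ)⁻¹^4 * Complex.exp ((t:ℂ) * Complex.I)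
          + (-1:ℂ) * (h:ℂ)^4 * (h:ℂ)⁻¹^4) * hef
        + ((1:ℂ)
          + ((-1:ℂ)/8) * (h:ℂ)⁻¹^2
          + ((-1:ℂ)/4) * (h:ℂ)⁻¹^2 * Complex.exp ((t:ℂ) * Complex.I)
          + (1:ℂ) * (h:ℂ) * (h:ℂ)⁻¹
          + ((-1:ℂ)/8) * (h:ℂ) * (h:ℂ)⁻¹^3
          + ((-1:ℂ)/4) * (h:ℂ) * (h:ℂ)⁻¹^3 * Complex.exp ((t:ℂ) * Complex.I)
          + ((-3:ℂ)/2) * (h:ℂ)^2 * (h:ℂ)⁻¹^2 * Complex.exp ((t:ℂ) * Complex.I)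
          + (-1:ℂ) * (h:ℂ)^2 * (h:ℂ)⁻¹^2 * Complex.exp ((t:ℂ) * Complex.I)^2
          + ((-3:ℂ)/2) * (h:ℂ)^3 * (h:ℂ)⁻¹^3 * Complex.exp ((t:ℂ) * Complex.I)
          + (-1:ℂ) * (h:ℂ)^3 * (h:ℂ)⁻¹^3 * Complex.exp ((t:ℂ) * Complex.I)^2) * hxi
    · simp [hwdef, Cmat, qInf, Matrix.mulVec, dotProduct, Fin.sum_univ_four]
      linear_combination (norm := ring1)
        (((1:ℂ)/4) * (h:ℂ)⁻¹^2 * Complex.exp ((t:ℂ) * Complex.I) * Complex.exp (-((t:ℂ) * Complex.I))) * hd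
        + (((1:ℂ)/4) * (h:ℂ)⁻¹^2
          + ((3:ℂ)/4) * (h:ℂ)^2 * (h:ℂ)⁻¹^2
          + ((1:ℂ)/2) * (h:ℂ)^2 * (h:ℂ)⁻¹^2 * Complex.exp (-((t:ℂ) * Complex.I))
          + ((1:ℂ)/2) * (h:ℂ)^2 * (h:ℂ)⁻¹^2 * Complex.exp ((t:ℂ) * Complex.I)) * hef
        + (((3:ℂ)/4)
          + ((1:ℂ)/2) * Complex.exp ((t:ℂ) * Complex.I)
          + ((3:ℂ)/4) * (h:ℂ) * (h:ℂ)⁻¹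
          + ((1:ℂ)/2) * (h:ℂ) * (h:ℂ)⁻¹ * Complex.exp ((t:ℂ) * Complex.I)) * hxi
    · simp [hwdef, Cmat, qInf, Matrix.mulVec, dotProduct, Fin.sum_univ_four]
      try rw [hcos]
      linear_combination (norm := ring1)
        (((-1:ℂ)/2) * (h:ℂ)^2 * (h:ℂ)⁻¹^3 * ((Dparam h t : ℝ) : ℂ)) * hef
        + (((-1:ℂ)/4) * (h:ℂ)⁻¹ * Complex.exp ((t:ℂ) * Complex.I) * ((Dparam h t : ℝ) : ℂ)
          + ((-1:ℂ)/2) * (h:ℂ)⁻¹ * Complex.exp ((t:ℂ) * Complex.I)^2 * ((Dparam h t : ℝ) : ℂ)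
          + ((-1:ℂ)/4) * (h:ℂ) * (h:ℂ)⁻¹^2 * Complex.exp ((t:ℂ) * Complex.I) * ((Dparam h t : ℝ) : ℂ)
          + ((-1:ℂ)/2) * (h:ℂ) * (h:ℂ)⁻¹^2 * Complex.exp ((t:ℂ) * Complex.I)^2 * ((Dparam h t : ℝ) : ℂ)) * hxi
    · simp [hwdef, Cmat, qInf, Matrix.mulVec, dotProduct, Fin.sum_univ_four]
      linear_combination (norm := ring1)
        (((1:ℂ)/4) * (h:ℂ)⁻¹^2 * Complex.exp ((t:ℂ) * Complex.I) * Complex.exp (-((t:ℂ) * Complex.I))) * hd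
        + (((1:ℂ)/4) * (h:ℂ)⁻¹^2
          + ((3:ℂ)/4) * (h:ℂ)^2 * (h:ℂ)⁻¹^2
          + ((1:ℂ)/2) * (h:ℂ)^2 * (h:ℂ)⁻¹^2 * Complex.exp (-((t:ℂ) * Complex.I))
          + ((1:ℂ)/2) * (h:ℂ)^2 * (h:ℂ)⁻¹^2 * Complex.exp ((t:ℂ) * Complex.I)) * hef
        + (((1:ℂ)/4)
          + ((1:ℂ)/2) * Complex.exp ((t:ℂ) * Complex.I)
          + ((1:ℂ)/4) * (h:ℂ) * (h:ℂ)⁻¹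
          + ((1:ℂ)/2) * (h:ℂ) * (h:ℂ)⁻¹ * Complex.exp ((t:ℂ) * Complex.I)) * hxi
  have hdet : (Cmat h t).det = 1 := by
    simp [Cmat, Matrix.det_succ_row_zero, Fin.sum_univ_succ]
    simp only [show Fin.succAbove (1:Fin 4) 2 = 3 from by decide,
      show Fin.succAbove (2:Fin 4) 2 = 3 from by decide,
      show Fin.castSucc (2:Fin 3) = (2:Fin 4) from by decide]
    simp [show Fin.succAbove (3:Fin 4) 2 = 2 from by decide]
    rw [hcos]
    linear_combination (norm := ring1)
        (((-1:ℂ)/4) * (h:ℂ)^2 * (h:ℂ)⁻¹^6 * Complex.exp ((t:ℂ) * Complex.I) * Complex.exp (-((t:ℂ) * Complex.I))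
          + ((1:ℂ)/2) * (h:ℂ)^4 * (h:ℂ)⁻¹^6
          + ((-1:ℂ)/2) * (h:ℂ)^4 * (h:ℂ)⁻¹^6 * Complex.exp (-((t:ℂ) * Complex.I))
          + ((-1:ℂ)/2) * (h:ℂ)^4 * (h:ℂ)⁻¹^6 * Complex.exp ((t:ℂ) * Complex.I)
          + ((-1:ℂ)/4) * (h:ℂ)^4 * (h:ℂ)⁻¹^6 * Complex.exp ((t:ℂ) * Complex.I) * Complex.exp (-((t:ℂ) * Complex.I))) * hd
        + (((-1:ℂ)/4) * (h:ℂ)^2 * (h:ℂ)⁻¹^6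
          + ((-1:ℂ)/2) * (h:ℂ)^4 * (h:ℂ)⁻¹^6
          + ((-1:ℂ)/2) * (h:ℂ)^4 * (h:ℂ)⁻¹^6 * Complex.exp (-((t:ℂ) * Complex.I))
          + ((-1:ℂ)/2) * (h:ℂ)^4 * (h:ℂ)⁻¹^6 * Complex.exp ((t:ℂ) * Complex.I)
          + ((-1:ℂ)/4) * (h:ℂ)^6 * (h:ℂ)⁻¹^6
          + ((1:ℂ)/2) * (h:ℂ)^6 * (h:ℂ)⁻¹^6 * Complex.exp (-((t:ℂ) * Complex.I))
          + ((1:ℂ)/2) * (h:ℂ)^6 * (h:ℂ)⁻¹^6 * Complex.exp ((t:ℂ) * Complex.I)) * hef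
        + ((1:ℂ)
          + (1:ℂ) * (h:ℂ) * (h:ℂ)⁻¹
          + (1:ℂ) * (h:ℂ)^2 * (h:ℂ)⁻¹^2
          + (1:ℂ) * (h:ℂ)^3 * (h:ℂ)⁻¹^3
          + (1:ℂ) * (h:ℂ)^4 * (h:ℂ)⁻¹^4
          + (1:ℂ) * (h:ℂ)^5 * (h:ℂ)⁻¹^5) * hxi
  have hunit : IsUnit (Cmat h t).det := by rw [hdet]; exact isUnit_one
  have hwinv : (Cmat h t)⁻¹ *ᵥ qInf = w := by
    rw [← hCw, Matrix.mulVec_mulVec, Matrix.nonsing_inv_mul _ hunit, Matrix.one_mulVec]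
  have key : qInf - w + Cmat h t *ᵥ (Bmat h *ᵥ w)
      - Cmat h t *ᵥ (Bmat h *ᵥ (Cmat h t *ᵥ qInf)) = 0 := by
    funext i
    fin_cases i
    · simp [hwdef, Cmat, Bmat, qInf, Matrix.mulVec, dotProduct, Fin.sum_univ_four]
      try rw [hcos]
      linear_combination (norm := ring1)
        ((1:ℂ) * (h:ℂ)^4 * (h:ℂ)⁻¹^4
          + (-1:ℂ) * (h:ℂ)^6 * (h:ℂ)⁻¹^6) * hef
        + ((1:ℂ) * Complex.exp ((t:ℂ) * Complex.I)
          + (1:ℂ) * (h:ℂ) * (h:ℂ)⁻¹ * Complex.exp ((t:ℂ) * Complex.I)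
          + ((-1:ℂ)/4) * (h:ℂ)^2 * (h:ℂ)⁻¹^4
          + ((-1:ℂ)/4) * (h:ℂ)^2 * (h:ℂ)⁻¹^4 * Complex.exp ((t:ℂ) * Complex.I)
          + ((-1:ℂ)/4) * (h:ℂ)^3 * (h:ℂ)⁻¹^5
          + ((-1:ℂ)/4) * (h:ℂ)^3 * (h:ℂ)⁻¹^5 * Complex.exp ((t:ℂ) * Complex.I)
          + (-1:ℂ) * (h:ℂ)^4 * (h:ℂ)⁻¹^4
          + (-1:ℂ) * (h:ℂ)^4 * (h:ℂ)⁻¹^4 * Complex.exp (-((t:ℂ) * Complex.I))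
          + (-1:ℂ) * (h:ℂ)^4 * (h:ℂ)⁻¹^4 * Complex.exp ((t:ℂ) * Complex.I)
          + (-1:ℂ) * (h:ℂ)^4 * (h:ℂ)⁻¹^4 * Complex.exp ((t:ℂ) * Complex.I)^2
          + (-1:ℂ) * (h:ℂ)^5 * (h:ℂ)⁻¹^5
          + (-1:ℂ) * (h:ℂ)^5 * (h:ℂ)⁻¹^5 * Complex.exp (-((t:ℂ) * Complex.I))
          + (-1:ℂ) * (h:ℂ)^5 * (h:ℂ)⁻¹^5 * Complex.exp ((t:ℂ) * Complex.I)
          + (-1:ℂ) * (h:ℂ)^5 * (h:ℂ)⁻¹^5 * Complex.exp ((t:ℂ) * Complex.I)^2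
          + (-4:ℂ) * (h:ℂ)^6 * (h:ℂ)⁻¹^4
          + (-4:ℂ) * (h:ℂ)^6 * (h:ℂ)⁻¹^4 * Complex.exp ((t:ℂ) * Complex.I)
          + (-4:ℂ) * (h:ℂ)^7 * (h:ℂ)⁻¹^5
          + (-4:ℂ) * (h:ℂ)^7 * (h:ℂ)⁻¹^5 * Complex.exp ((t:ℂ) * Complex.I)) * hxi
    · simp [hwdef, Cmat, Bmat, qInf, Matrix.mulVec, dotProduct, Fin.sum_univ_four]
      try rw [hcos]
      linear_combination (norm := ring1)
        ((-2:ℂ) * (h:ℂ)^4 * (h:ℂ)⁻¹^2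
          + (2:ℂ) * (h:ℂ)^6 * (h:ℂ)⁻¹^4) * hef
        + (((1:ℂ)/2) * (h:ℂ)^2 * (h:ℂ)⁻¹^2
          + ((1:ℂ)/2) * (h:ℂ)^2 * (h:ℂ)⁻¹^2 * Complex.exp ((t:ℂ) * Complex.I)
          + ((1:ℂ)/2) * (h:ℂ)^3 * (h:ℂ)⁻¹^3
          + ((1:ℂ)/2) * (h:ℂ)^3 * (h:ℂ)⁻¹^3 * Complex.exp ((t:ℂ) * Complex.I)
          + (2:ℂ) * (h:ℂ)^4 * (h:ℂ)⁻¹^2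
          + (2:ℂ) * (h:ℂ)^4 * (h:ℂ)⁻¹^2 * Complex.exp (-((t:ℂ) * Complex.I))
          + (2:ℂ) * (h:ℂ)^5 * (h:ℂ)⁻¹^3
          + (2:ℂ) * (h:ℂ)^5 * (h:ℂ)⁻¹^3 * Complex.exp (-((t:ℂ) * Complex.I))) * hxi
    · simp [hwdef, Cmat, Bmat, qInf, Matrix.mulVec, dotProduct, Fin.sum_univ_four]
      try rw [hcos]
      linear_combination (norm := ring1)
        (((-1:ℂ)/2) * (h:ℂ)^2 * (h:ℂ)⁻¹^3 * Complex.exp ((t:ℂ) * Complex.I) * ((Dparam h t : ℝ) : ℂ)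
          + ((-1:ℂ)/2) * (h:ℂ)^2 * (h:ℂ)⁻¹^3 * Complex.exp ((t:ℂ) * Complex.I)^2 * ((Dparam h t : ℝ) : ℂ)
          + ((-1:ℂ)/2) * (h:ℂ)^3 * (h:ℂ)⁻¹^4 * Complex.exp ((t:ℂ) * Complex.I) * ((Dparam h t : ℝ) : ℂ)
          + ((-1:ℂ)/2) * (h:ℂ)^3 * (h:ℂ)⁻¹^4 * Complex.exp ((t:ℂ) * Complex.I)^2 * ((Dparam h t : ℝ) : ℂ)
          + (-2:ℂ) * (h:ℂ)^4 * (h:ℂ)⁻¹^3 * ((Dparam h t : ℝ) : ℂ)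
          + (-2:ℂ) * (h:ℂ)^4 * (h:ℂ)⁻¹^3 * Complex.exp ((t:ℂ) * Complex.I) * ((Dparam h t : ℝ) : ℂ)
          + (-2:ℂ) * (h:ℂ)^5 * (h:ℂ)⁻¹^4 * ((Dparam h t : ℝ) : ℂ)
          + (-2:ℂ) * (h:ℂ)^5 * (h:ℂ)⁻¹^4 * Complex.exp ((t:ℂ) * Complex.I) * ((Dparam h t : ℝ) : ℂ)) * hxi
    · simp [hwdef, Cmat, Bmat, qInf, Matrix.mulVec, dotProduct, Fin.sum_univ_four]
      try rw [hcos]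
      linear_combination (norm := ring1)
        ((-2:ℂ) * (h:ℂ)^4 * (h:ℂ)⁻¹^2
          + (2:ℂ) * (h:ℂ)^6 * (h:ℂ)⁻¹^4) * hef
        + (((1:ℂ)/2) * (h:ℂ)^2 * (h:ℂ)⁻¹^2
          + ((1:ℂ)/2) * (h:ℂ)^2 * (h:ℂ)⁻¹^2 * Complex.exp ((t:ℂ) * Complex.I)
          + ((1:ℂ)/2) * (h:ℂ)^3 * (h:ℂ)⁻¹^3
          + ((1:ℂ)/2) * (h:ℂ)^3 * (h:ℂ)⁻¹^3 * Complex.exp ((t:ℂ) * Complex.I)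
          + (4:ℂ) * (h:ℂ)^4 * (h:ℂ)⁻¹^2
          + (2:ℂ) * (h:ℂ)^4 * (h:ℂ)⁻¹^2 * Complex.exp (-((t:ℂ) * Complex.I))
          + (2:ℂ) * (h:ℂ)^4 * (h:ℂ)⁻¹^2 * Complex.exp ((t:ℂ) * Complex.I)
          + (4:ℂ) * (h:ℂ)^5 * (h:ℂ)⁻¹^3
          + (2:ℂ) * (h:ℂ)^5 * (h:ℂ)⁻¹^3 * Complex.exp (-((t:ℂ) * Complex.I))
          + (2:ℂ) * (h:ℂ)^5 * (h:ℂ)⁻¹^3 * Complex.exp ((t:ℂ) * Complex.I)) * hxi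
  have part1 : qInf - (Cmat h t)⁻¹.mulVec qInf
        + (Cmat h t * Bmat h * (Cmat h t)⁻¹).mulVec qInf
        - (Cmat h t * Bmat h * Cmat h t).mulVec qInf = 0 := by
    have e1 : (Cmat h t * Bmat h * (Cmat h t)⁻¹).mulVec qInf
        = Cmat h t *ᵥ (Bmat h *ᵥ ((Cmat h t)⁻¹ *ᵥ qInf)) := by
      rw [Matrix.mulVec_mulVec, Matrix.mulVec_mulVec]
    have e2 : (Cmat h t * Bmat h * Cmat h t).mulVec qInf
        = Cmat h t *ᵥ (Bmat h *ᵥ (Cmat h t *ᵥ qInf)) := by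
      rw [Matrix.mulVec_mulVec, Matrix.mulVec_mulVec]
    rw [e1, e2, hwinv]
    exact key
  refine ⟨part1, ?_⟩
  set v1 := (Cmat h t)⁻¹.mulVec qInf with hv1
  set v2 := (Cmat h t * Bmat h * (Cmat h t)⁻¹).mulVec qInf with hv2
  set v3 := (Cmat h t * Bmat h * Cmat h t).mulVec qInf with hv3
  have hq : qInf = v1 - v2 + v3 := by
    have h0 := part1
    have : qInf - v1 + v2 - v3 = 0 := h0
    linear_combination (norm := abel) this
  have hspan : Submodule.span ℂ ({qInf, v1, v2, v3} : Set (Fin 4 → ℂ))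
      ≤ Submodule.span ℂ ({v1, v2, v3} : Set (Fin 4 → ℂ)) := by
    rw [Submodule.span_le]
    rintro y (rfl | rfl | rfl | rfl)
    · rw [hq]
      exact add_mem (sub_mem (Submodule.subset_span (by simp))
        (Submodule.subset_span (by simp))) (Submodule.subset_span (by simp))
    · exact Submodule.subset_span (by simp)
    · exact Submodule.subset_span (by simp)
    · exact Submodule.subset_span (by simp)
  refine le_trans (Submodule.finrank_mono hspan) ?_
  refine le_trans (finrank_span_le_card _) ?_
  have hsub : ({v1, v2, v3} : Set (Fin 4 → ℂ)).toFinset ⊆ ({v1, v2, v3} : Finset (Fin 4 → ℂ)) := by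
    intro y hy
    simpa using (Set.mem_toFinset.mp hy)
  refine le_trans (Finset.card_le_card hsub) ?_
  refine le_trans (Finset.card_insert_le _ _) ?_
  have := Finset.card_insert_le v2 ({v3} : Finset (Fin 4 → ℂ))
  simp at this ⊢
  omega
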